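/- arXiv:0805.0244 — 5 statements merged into one kernel-verified Lean document; each statement's English description precedes it below -/
import Mathlib

section
/- Let ω be a continuity modulus satisfying (ω1), let c:[0,1]→ℝ, and let {t_k} be a strictly decreasing sequence of positive real numbers with t₀ = 1 and t_k → 0. Assume c is continuous at 0. Then c is ω-continuous on [0,1] if and only if there exists a constant L such that: (i) |c(t_i)−c(t_j)| ≤ L·ω(|t_i−t_j|) for every pair of positive integers i and j; and (ii) |c(a)−c(b)| ≤ L·ω(|a−b|) for every k ≥ 1 and all a, b in [t_k, t_{k−1}]. -/
/-!
Write `I_k = [t (k+1), t k]`. For `0 < a < b ≤ 1` with `a ∈ I_i`, `b ∈ I_j`, either both points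
lie in one interval `I_i`, or `a ≤ t i ≤ t (j+1) ≤ b` splits `[a, b]` into a piece of `I_i`,
a step of the sequence and a piece of `I_j`; by monotonicity of `ω` each piece costs at most
`L ω(b - a)`, so `3L` works on `(0, 1]`. The point `0` is reached by letting `a → 0⁺`, using
the continuity of `c` at `0` and `ω(b - a) ≤ ω(b)`.
-/

open Set Filter Topology

def ModulusOnWith (L : ℝ) (ω f : ℝ → ℝ) (s : Set ℝ) : Prop :=
  ∀ a ∈ s, ∀ b ∈ s, |f a - f b| ≤ L * ω |a - b|

namespace ModulusOnWith

variable {L L' : ℝ} {ω f : ℝ → ℝ} {s s' : Set ℝ}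

lemma mono_set (h : ModulusOnWith L ω f s) (hs : s' ⊆ s) : ModulusOnWith L ω f s' :=
  fun a ha b hb => h a (hs ha) b (hs hb)

lemma mono_const (h : ModulusOnWith L ω f s) (hLL' : L ≤ L') (hω : ∀ x ≥ 0, 0 ≤ ω x) :
    ModulusOnWith L' ω f s :=
  fun a ha b hb => (h a ha b hb).trans <|
    mul_le_mul_of_nonneg_right hLL' (hω _ (abs_nonneg _))

lemma of_forall_le (h : ∀ a ∈ s, ∀ b ∈ s, a ≤ b → |f a - f b| ≤ L * ω (b - a)) :
    ModulusOnWith L ω f s := by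
  intro a ha b hb
  rcases le_total a b with hab | hba
  · rw [abs_sub_comm a, abs_of_nonneg (sub_nonneg.2 hab)]
    exact h a ha b hb hab
  · rw [abs_sub_comm (f a), abs_of_nonneg (sub_nonneg.2 hba)]
    exact h b hb a ha hba

lemma abs_sub_le_of_mem_Icc (h : ModulusOnWith L ω f s) (hL : 0 ≤ L)
    (hω : MonotoneOn ω (Ici 0)) {x y a b : ℝ} (hxs : x ∈ s) (hys : y ∈ s)
    (hx : x ∈ Icc a b) (hy : y ∈ Icc a b) :
    |f x - f y| ≤ L * ω (b - a) := by
  have hdist : |x - y| ≤ b - a := abs_sub_le_of_le_of_le hx.1 hx.2 hy.1 hy.2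
  exact (h x hxs y hys).trans <| mul_le_mul_of_nonneg_left
    (hω (mem_Ici.2 (abs_nonneg _)) (mem_Ici.2 ((abs_nonneg _).trans hdist)) hdist) hL

lemma Icc_of_Ioc {l r : ℝ} (h : ModulusOnWith L ω f (Ioc l r)) (hL : 0 ≤ L)
    (hω : MonotoneOn ω (Ici 0)) (hω_nonneg : ∀ x ≥ 0, 0 ≤ ω x)
    (hf : ContinuousWithinAt f (Icc l r) l) : ModulusOnWith L ω f (Icc l r) := by
  refine of_forall_le fun a ha b hb hab => ?_
  rcases ha.1.eq_or_lt with rfl | hla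
  · rcases hab.eq_or_lt with rfl | hab
    · simpa using mul_nonneg hL (hω_nonneg 0 le_rfl)
    have := left_nhdsWithin_Ioo_neBot hab
    have hlim : Tendsto (fun x => |f x - f b|) (𝓝[Ioo l b] l) (𝓝 |f l - f b|) :=
      ((hf.mono fun x hx => ⟨hx.1.le, hx.2.le.trans hb.2⟩).tendsto.sub_const _).abs
    refine le_of_tendsto hlim (eventually_nhdsWithin_of_forall fun x hx => ?_)
    exact h.abs_sub_le_of_mem_Icc hL hω ⟨hx.1, hx.2.le.trans hb.2⟩ ⟨hx.1.trans hx.2, hb.2⟩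
      ⟨hx.1.le, hx.2.le⟩ ⟨hab.le, le_rfl⟩
  · exact h.abs_sub_le_of_mem_Icc hL hω ⟨hla, hab.trans hb.2⟩ ⟨hla.trans_le hab, hb.2⟩
      ⟨le_rfl, hab⟩ ⟨hab, le_rfl⟩

end ModulusOnWith

lemma exists_mem_Icc_succ_of_tendsto {t : ℕ → ℝ} {l x : ℝ} (ht : Tendsto t atTop (𝓝 l))
    (hlx : l < x) (hx : x ≤ t 0) : ∃ k, x ∈ Icc (t (k + 1)) (t k) := by
  have hP : ∃ n, t (n + 1) ≤ x :=
    ((tendsto_add_atTop_nat 1).eventually (ht.eventually (gt_mem_nhds hlx))).exists.imp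
      fun _ hn => hn.le
  refine ⟨Nat.find hP, Nat.find_spec hP, ?_⟩
  rcases hk : Nat.find hP with _ | k
  · exact hx
  · exact (not_le.1 (Nat.find_min hP (by omega))).le

lemma modulusOnWith_Ioc_of_intervals {L l : ℝ} {ω c : ℝ → ℝ} {t : ℕ → ℝ} (hL : 0 ≤ L)
    (hω : MonotoneOn ω (Ici 0)) (hω_nonneg : ∀ x ≥ 0, 0 ≤ ω x) (ht : Antitone t)
    (ht_lim : Tendsto t atTop (𝓝 l)) (hseq : ModulusOnWith L ω c (t '' Ici 1))
    (hint : ∀ k, ModulusOnWith L ω c (Icc (t (k + 1)) (t k))) :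
    ModulusOnWith (3 * L) ω c (Ioc l (t 0)) := by
  refine ModulusOnWith.of_forall_le fun a ha b hb hab => ?_
  obtain ⟨i, hai⟩ := exists_mem_Icc_succ_of_tendsto ht_lim ha.1 ha.2
  obtain ⟨j, hbj⟩ := exists_mem_Icc_succ_of_tendsto ht_lim hb.1 hb.2
  rcases le_or_gt i j with hij | hji
  · have hbi : b ∈ Icc (t (i + 1)) (t i) := ⟨hai.1.trans hab, hbj.2.trans (ht hij)⟩
    calc |c a - c b| ≤ L * ω (b - a) :=
          (hint i).abs_sub_le_of_mem_Icc hL hω hai hbi ⟨le_rfl, hab⟩ ⟨hab, le_rfl⟩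
      _ ≤ 3 * L * ω (b - a) := by nlinarith [hω_nonneg (b - a) (sub_nonneg.2 hab)]
  · have hti : t i ∈ Icc a b := ⟨hai.2, (ht hji).trans hbj.1⟩
    have htj : t (j + 1) ∈ Icc a b := ⟨hai.2.trans (ht hji), hbj.1⟩
    have h₁ := (hint i).abs_sub_le_of_mem_Icc hL hω hai ⟨ht i.le_succ, le_rfl⟩ ⟨le_rfl, hab⟩ hti
    have h₂ := hseq.abs_sub_le_of_mem_Icc hL hω ⟨i, Nat.one_le_of_lt hji, rfl⟩
      ⟨j + 1, Nat.le_add_left 1 j, rfl⟩ hti htj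
    have h₃ := (hint j).abs_sub_le_of_mem_Icc hL hω ⟨le_rfl, ht j.le_succ⟩ hbj htj ⟨hab, le_rfl⟩
    calc |c a - c b| ≤ |c a - c (t i)| + |c (t i) - c (t (j + 1))| + |c (t (j + 1)) - c b| :=
          (abs_sub_le _ (c (t (j + 1))) _).trans (add_le_add_left (abs_sub_le _ _ _) _)
      _ ≤ 3 * L * ω (b - a) := by linarith

theorem omega_continuity_via_intervals_general
    (ω : ℝ → ℝ)
    (hω_mono : MonotoneOn ω (Set.Ici 0))
    (hω_nonneg : ∀ σ ≥ (0:ℝ), 0 ≤ ω σ)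
    (c : ℝ → ℝ) (t : ℕ → ℝ)
    (ht_anti : StrictAnti t)
    (ht_zero : t 0 = 1)
    (ht_pos : ∀ k, 0 < t k)
    (ht_lim : Filter.Tendsto t Filter.atTop (nhds 0))
    (hc_cont0 : ContinuousWithinAt c (Set.Icc 0 1) 0) :
    (∃ L : ℝ, ∀ a ∈ Set.Icc (0:ℝ) 1, ∀ b ∈ Set.Icc (0:ℝ) 1,
        |c a - c b| ≤ L * ω |a - b|) ↔
    (∃ L : ℝ,
      (∀ i j : ℕ, 1 ≤ i → 1 ≤ j → |c (t i) - c (t j)| ≤ L * ω |t i - t j|) ∧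
      (∀ k : ℕ, 1 ≤ k → ∀ a ∈ Set.Icc (t k) (t (k - 1)), ∀ b ∈ Set.Icc (t k) (t (k - 1)),
        |c a - c b| ≤ L * ω |a - b|)) := by
  have ht_mem : ∀ k, t k ∈ Icc (0 : ℝ) 1 :=
    fun k => ⟨(ht_pos k).le, ht_zero ▸ ht_anti.antitone k.zero_le⟩
  constructor
  · rintro ⟨L, hL⟩
    exact ⟨L, fun i j _ _ => hL _ (ht_mem i) _ (ht_mem j), fun k _ =>
      ModulusOnWith.mono_set hL (Icc_subset_Icc (ht_mem k).1 (ht_mem _).2)⟩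
  · rintro ⟨L, hseq, hint⟩
    have hM : L ≤ max L 0 := le_max_left L 0
    have hseq' : ModulusOnWith L ω c (t '' Ici 1) := by
      rintro _ ⟨i, hi, rfl⟩ _ ⟨j, hj, rfl⟩
      exact hseq i j hi hj
    have hint' (k : ℕ) : ModulusOnWith (max L 0) ω c (Icc (t (k + 1)) (t k)) :=
      ModulusOnWith.mono_const (hint (k + 1) k.succ_pos) hM hω_nonneg
    have hpos := modulusOnWith_Ioc_of_intervals (le_max_right L 0) hω_mono hω_nonneg
      ht_anti.antitone ht_lim (hseq'.mono_const hM hω_nonneg) hint'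
    rw [ht_zero] at hpos
    exact ⟨_, hpos.Icc_of_Ioc (by positivity) hω_mono hω_nonneg hc_cont0⟩

/-- Given a strictly decreasing sequence `t_k → 0⁺` with
`t₀ = 1`, a function `c : [0,1] → ℝ` continuous at `0` is `ω`-continuous on
`[0,1]` iff there exists `L` controlling (i) the increments along the sequence
`{t_k}` (positive indices) and (ii) the increments inside each interval
`[t_k, t_{k-1}]`. -/
theorem omega_continuity_via_intervals
    (ω : ℝ → ℝ)
    (hω_cont : ContinuousOn ω (Set.Ici 0))
    (hω_mono : MonotoneOn ω (Set.Ici 0))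
    (hω_nonneg : ∀ σ ≥ (0:ℝ), 0 ≤ ω σ)
    (hω_zero : ω 0 = 0)
    (hω_subadd : ∀ a ≥ (0:ℝ), ∀ b ≥ (0:ℝ), ω (a + b) ≤ ω a + ω b)
    (c : ℝ → ℝ) (t : ℕ → ℝ)
    (ht_anti : StrictAnti t)
    (ht_zero : t 0 = 1)
    (ht_pos : ∀ k, 0 < t k)
    (ht_lim : Filter.Tendsto t Filter.atTop (nhds 0))
    (hc_cont0 : ContinuousWithinAt c (Set.Icc 0 1) 0) :
    (∃ L : ℝ, ∀ a ∈ Set.Icc (0:ℝ) 1, ∀ b ∈ Set.Icc (0:ℝ) 1,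
        |c a - c b| ≤ L * ω |a - b|) ↔
    (∃ L : ℝ,
      (∀ i j : ℕ, 1 ≤ i → 1 ≤ j → |c (t i) - c (t j)| ≤ L * ω |t i - t j|) ∧
      (∀ k : ℕ, 1 ≤ k → ∀ a ∈ Set.Icc (t k) (t (k - 1)), ∀ b ∈ Set.Icc (t k) (t (k - 1)),
        |c a - c b| ≤ L * ω |a - b|)) :=
  omega_continuity_via_intervals_general ω hω_mono hω_nonneg c t ht_anti ht_zero ht_pos ht_lim
    hc_cont0
end

section
/- Let ω be a continuity modulus satisfying (ω1) and (ω2). Let {t_k} be a strictly decreasing sequence with t₀ = 1, t_k > 0, t_k → 0; let {s_k} satisfy t_k < s_k < t_{k−1} for all k ≥ 1; let {η_k} be an increasing sequence of positive reals; let {δ_k} be a nonincreasing sequence of positive reals with δ₀ = 1 and limit δ_∞; let {ε_k} be positive with ε_k ≤ 1/16 and ε_k·δ_k → 0; and assume √δ_k·η_k·t_k/(2π) and √δ_k·η_k·s_k/(2π) are positive integers for every k ≥ 1. Define b(ε,t) := 1 − 4ε·sin(2t) − ε²·(1−cos(2t))², and define c:[0,1]→ℝ by c(0) = δ_∞, c(t)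 = δ_k·b(ε_k, √δ_k·η_k·t) for t ∈ [t_k, s_k], and c(t) = ((δ_{k−1}−δ_k)/(t_{k−1}−s_k))·(t−s_k) + δ_k for t ∈ [s_k, t_{k−1}]. If sup_{i<j} (δ_i−δ_j)/ω(t_i−t_j) < ∞, sup_{k≥1} (δ_{k−1}−δ_k)/ω(t_{k−1}−s_k) < ∞, and sup_{k≥1} ε_k·δ_k/ω(2π/(η_k·√δ_k)) < ∞, then c is ω-continuous on [0,1]. -/
open Real

lemma my_sin_lip (x y : ℝ) : |Real.sin x - Real.sin y| ≤ |x - y| := by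
  rw [Real.sin_sub_sin, abs_mul, abs_mul, abs_two]
  calc 2 * |Real.sin ((x - y) / 2)| * |Real.cos ((x + y) / 2)|
      ≤ 2 * |(x - y) / 2| * 1 :=
        mul_le_mul (by have := Real.abs_sin_le_abs (x := (x - y) / 2); linarith)
          (Real.abs_cos_le_one _) (abs_nonneg _) (by positivity)
    _ = |x - y| := by rw [abs_div, abs_two]; ring

lemma my_cos_lip (x y : ℝ) : |Real.cos x - Real.cos y| ≤ |x - y| := by
  rw [Real.cos_sub_cos, abs_mul, abs_mul, abs_neg, abs_two]
  calc 2 * |Real.sin ((x + y) / 2)| * |Real.sin ((x - y) / 2)|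
      ≤ 2 * 1 * |(x - y) / 2| :=
        mul_le_mul (by have := Real.abs_sin_le_one ((x + y) / 2); linarith)
          Real.abs_sin_le_abs (abs_nonneg _) (by positivity)
    _ = |x - y| := by rw [abs_div, abs_two]; ring

lemma my_sin_bdd (x y : ℝ) : |Real.sin x - Real.sin y| ≤ 2 := by
  have h1 := Real.abs_sin_le_one x
  have h2 := Real.abs_sin_le_one y
  calc |Real.sin x - Real.sin y| ≤ |Real.sin x| + |Real.sin y| := abs_sub _ _
    _ ≤ 2 := by linarith

lemma my_cos_bdd (x y : ℝ) : |Real.cos x - Real.cos y| ≤ 2 := by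
  have h1 := Real.abs_cos_le_one x
  have h2 := Real.abs_cos_le_one y
  calc |Real.cos x - Real.cos y| ≤ |Real.cos x| + |Real.cos y| := abs_sub _ _
    _ ≤ 2 := by linarith

lemma amp_coeff (dk ek M S : ℝ) (hd : 0 < dk) (he : 0 < ek) (hel : ek ≤ 1 / 16)
    (hM : 0 ≤ M) (hS : S ≤ dk * (4 * ek * M + ek ^ 2 * (4 * M))) :
    S ≤ 10 * (ek * dk) * M := by
  nlinarith [mul_nonneg (mul_nonneg hd.le he.le) hM,
    mul_nonneg (mul_nonneg (mul_nonneg hd.le he.le) hM)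
      (by linarith : (0:ℝ) ≤ 1 - 4 * ek)]

lemma case_amp (X E C P Q : ℝ) (hX : X ≤ 20 * E) (h3 : E ≤ C * P)
    (hm : P ≤ Q) (hC : 0 ≤ C) (hQ : 0 ≤ Q) : X ≤ 126 * C * Q := by
  nlinarith [mul_le_mul_of_nonneg_left hm hC, mul_nonneg hC hQ]

lemma case_lip (X E θ σ C P Q : ℝ) (hX : X ≤ 20 * (E * (θ * σ)))
    (h3 : E ≤ C * P) (h0 : σ * P ≤ 2 * π / θ * Q) (hθ : 0 < θ) (hσ : 0 < σ)
    (hC : 0 < C) (hP : 0 < P) (hQ : 0 < Q) (hE : 0 ≤ E) : X ≤ 126 * C * Q := by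
  have h1 : θ * (σ * P) ≤ θ * (2 * π / θ * Q) := mul_le_mul_of_nonneg_left h0 hθ.le
  have h2 : θ * (2 * π / θ * Q) = 2 * π * Q := by field_simp
  have h5 : E * (θ * (σ * P)) ≤ C * P * (2 * π * Q) :=
    mul_le_mul h3 (h1.trans h2.le)
      (mul_nonneg hθ.le (mul_nonneg hσ.le hP.le)) (mul_nonneg hC.le hP.le)
  have h6 : E * (θ * σ) ≤ 2 * π * C * Q := by
    refine le_of_mul_le_mul_right ?_ hP
    nlinarith [h5]
  nlinarith [h6, mul_pos hC hQ, Real.pi_lt_d2]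

lemma aff_combine (D T σ C Q W : ℝ) (h2 : D ≤ C * W) (h0 : σ * W ≤ T * Q)
    (hD : 0 ≤ D) (hT : 0 < T) (hσ : 0 < σ) (hQ : 0 < Q) (hW : 0 < W)
    (hC : 0 < C) : D / T * σ ≤ C * Q := by
  rw [div_mul_eq_mul_div, div_le_iff₀ hT]
  have h5 : D * (σ * W) ≤ C * W * (T * Q) :=
    mul_le_mul h2 h0 (mul_nonneg hσ.le hW.le) (mul_nonneg hC.le hW.le)
  have h6 : D * σ ≤ C * (T * Q) := by
    refine le_of_mul_le_mul_right ?_ hW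
    nlinarith [h5]
  nlinarith [h6]

/-- The coefficient `c(t)` of the general construction
(oscillating pieces `δ_k · b(ε_k, √δ_k η_k t)` on `[t_k, s_k]` and affine
interpolation on `[s_k, t_{k-1}]`, with `c 0 = δ_∞`) is `ω`-continuous on
`[0,1]` provided the three suprema of Proposition 4.2 are finite. -/
theorem construction_coefficient_omega_continuous
    (ω : ℝ → ℝ)
    (hω_cont : ContinuousOn ω (Set.Ici 0))
    (hω_mono : MonotoneOn ω (Set.Ici 0))
    (hω_nonneg : ∀ σ ≥ (0:ℝ), 0 ≤ ω σ)
    (hω_zero : ω 0 = 0)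
    (hω_subadd : ∀ a ≥ (0:ℝ), ∀ b ≥ (0:ℝ), ω (a + b) ≤ ω a + ω b)
    (hω2 : ∀ a b : ℝ, 0 < a → a ≤ b → a / ω a ≤ b / ω b)
    (t s η δ ε : ℕ → ℝ) (δinf : ℝ)
    (ht_anti : StrictAnti t)
    (ht_zero : t 0 = 1)
    (ht_pos : ∀ k, 0 < t k)
    (ht_lim : Filter.Tendsto t Filter.atTop (nhds 0))
    (hs : ∀ k : ℕ, 1 ≤ k → t k < s k ∧ s k < t (k - 1))
    (hη_pos : ∀ k, 0 < η k)
    (hη_mono : StrictMono η)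
    (hδ_anti : Antitone δ)
    (hδ_zero : δ 0 = 1)
    (hδ_pos : ∀ k, 0 < δ k)
    (hδ_lim : Filter.Tendsto δ Filter.atTop (nhds δinf))
    (hε_pos : ∀ k, 0 < ε k)
    (hε_le : ∀ k, ε k ≤ 1 / 16)
    (hεδ_lim : Filter.Tendsto (fun k => ε k * δ k) Filter.atTop (nhds 0))
    (hint_t : ∀ k : ℕ, 1 ≤ k → ∃ n : ℕ, 0 < n ∧
      Real.sqrt (δ k) * η k * t k / (2 * π) = (n : ℝ))
    (hint_s : ∀ k : ℕ, 1 ≤ k → ∃ n : ℕ, 0 < n ∧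
      Real.sqrt (δ k) * η k * s k / (2 * π) = (n : ℝ))
    (c : ℝ → ℝ)
    (hc_zero : c 0 = δinf)
    (hc_osc : ∀ k : ℕ, 1 ≤ k → ∀ x ∈ Set.Icc (t k) (s k),
      c x = δ k * (1 - 4 * ε k * Real.sin (2 * (Real.sqrt (δ k) * η k * x))
        - (ε k) ^ 2 * (1 - Real.cos (2 * (Real.sqrt (δ k) * η k * x))) ^ 2))
    (hc_aff : ∀ k : ℕ, 1 ≤ k → ∀ x ∈ Set.Icc (s k) (t (k - 1)),
      c x = (δ (k - 1) - δ k) / (t (k - 1) - s k) * (x - s k) + δ k)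
    (C : ℝ)
    (hsup₁ : ∀ i j : ℕ, i < j → δ i - δ j ≤ C * ω (t i - t j))
    (hsup₂ : ∀ k : ℕ, 1 ≤ k → δ (k - 1) - δ k ≤ C * ω (t (k - 1) - s k))
    (hsup₃ : ∀ k : ℕ, 1 ≤ k →
      ε k * δ k ≤ C * ω (2 * π / (η k * Real.sqrt (δ k)))) :
    ∃ L : ℝ, ∀ a ∈ Set.Icc (0:ℝ) 1, ∀ b ∈ Set.Icc (0:ℝ) 1,
      |c a - c b| ≤ L * ω |a - b| := by
  classical
  have hπ : (0:ℝ) < π := Real.pi_pos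
  have hsqrt_pos : ∀ k, 0 < Real.sqrt (δ k) := fun k => Real.sqrt_pos.2 (hδ_pos k)
  have hθ_pos : ∀ k, 0 < η k * Real.sqrt (δ k) := fun k => mul_pos (hη_pos k) (hsqrt_pos k)
  have hω_mono' : ∀ x y : ℝ, 0 ≤ x → x ≤ y → ω x ≤ ω y := fun x y hx hxy =>
    hω_mono (Set.mem_Ici.2 hx) (Set.mem_Ici.2 (hx.trans hxy)) hxy
  have hPpos : ∀ k : ℕ, 0 < 2 * π / (η k * Real.sqrt (δ k)) := fun k =>
    div_pos (by positivity) (hθ_pos k)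
  -- The "period" is at most t k
  have hPle : ∀ k : ℕ, 1 ≤ k → 2 * π / (η k * Real.sqrt (δ k)) ≤ t k := by
    intro k hk
    obtain ⟨n, hn, heq⟩ := hint_t k hk
    have h2π : (0:ℝ) < 2 * π := by positivity
    rw [div_eq_iff h2π.ne'] at heq
    have h1 : (1:ℝ) ≤ (n:ℝ) := by exact_mod_cast hn
    rw [div_le_iff₀ (hθ_pos k)]
    nlinarith [heq, h2π]
  -- C is positive
  have hCpos : 0 < C := by
    have h3 := hsup₃ 1 le_rfl
    have hεδ : 0 < ε 1 * δ 1 := mul_pos (hε_pos 1) (hδ_pos 1)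
    have hωn : 0 ≤ ω (2 * π / (η 1 * Real.sqrt (δ 1))) := hω_nonneg _ (hPpos 1).le
    nlinarith [h3, hεδ, hωn]
  -- ω is positive at positive arguments
  have hωpos : ∀ σ : ℝ, 0 < σ → 0 < ω σ := by
    intro σ hσ
    obtain ⟨N, hN⟩ := Filter.eventually_atTop.1 (ht_lim.eventually (gt_mem_nhds hσ))
    set k := max N 1 with hkdef
    have hk1 : 1 ≤ k := le_max_right _ _
    have htk : t k < σ := lt_of_le_of_lt (ht_anti.antitone (le_max_left N 1)) (hN N le_rfl)
    have h3 := hsup₃ k hk1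
    have hεδ : 0 < ε k * δ k := mul_pos (hε_pos k) (hδ_pos k)
    have hωP : 0 < ω (2 * π / (η k * Real.sqrt (δ k))) := by nlinarith [h3, hεδ, hCpos]
    exact lt_of_lt_of_le hωP (hω_mono' _ _ (hPpos k).le ((hPle k hk1).trans htk.le))
  -- values at grid points
  have hct : ∀ j : ℕ, c (t j) = δ j := by
    intro j
    have hk : 1 ≤ j + 1 := Nat.le_add_left 1 j
    have hsj := hs (j + 1) hk
    rw [Nat.add_sub_cancel] at hsj
    have hmem : t j ∈ Set.Icc (s (j + 1)) (t (j + 1 - 1)) := by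
      rw [Nat.add_sub_cancel]; exact ⟨hsj.2.le, le_rfl⟩
    have h := hc_aff (j + 1) hk (t j) hmem
    rw [Nat.add_sub_cancel] at h
    have hne : t j - s (j + 1) ≠ 0 := sub_ne_zero.2 (ne_of_gt hsj.2)
    rw [h, div_mul_cancel₀ _ hne]; ring
  -- δinf is a lower bound
  have hδinf_le : ∀ k, δinf ≤ δ k := fun k =>
    le_of_tendsto hδ_lim (Filter.eventually_atTop.2 ⟨k, fun j hj => hδ_anti hj⟩)
  -- δ k - δinf ≤ C ω (t k)
  have hδinfb : ∀ k : ℕ, δ k - δinf ≤ C * ω (t k) := by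
    intro k
    have hev : ∀ᶠ j in Filter.atTop, δ k - δ j ≤ C * ω (t k - t j) :=
      Filter.eventually_atTop.2 ⟨k + 1, fun j hj => hsup₁ k j (Nat.lt_of_succ_le hj)⟩
    have hL : Filter.Tendsto (fun j => δ k - δ j) Filter.atTop (nhds (δ k - δinf)) :=
      tendsto_const_nhds.sub hδ_lim
    have hbase : Filter.Tendsto (fun j => t k - t j) Filter.atTop (nhds (t k)) := by
      simpa using tendsto_const_nhds.sub ht_lim
    have hmem : ∀ᶠ j in Filter.atTop, t k - t j ∈ Set.Ici (0:ℝ) :=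
      Filter.eventually_atTop.2 ⟨k, fun j hj => sub_nonneg.2 (ht_anti.antitone hj)⟩
    have hR : Filter.Tendsto (fun j => C * ω (t k - t j)) Filter.atTop
        (nhds (C * ω (t k))) :=
      (((hω_cont (t k) (Set.mem_Ici.2 (ht_pos k).le)).tendsto).comp
        (tendsto_nhdsWithin_of_tendsto_nhds_of_eventually_within _ hbase hmem)).const_mul C
    exact le_of_tendsto_of_tendsto hL hR hev
  -- oscillating piece
  have hosc : ∀ k : ℕ, 1 ≤ k → ∀ a b : ℝ, a ∈ Set.Icc (t k) (s k) →
      b ∈ Set.Icc (t k) (s k) → a ≤ b → |c a - c b| ≤ 126 * C * ω (b - a) := by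
    intro k hk a b ha hb hab
    rcases eq_or_lt_of_le hab with rfl | hab'
    · simp [hω_zero]
    have hσpos : 0 < b - a := sub_pos.2 hab'
    have hθp : 0 < Real.sqrt (δ k) * η k := mul_pos (hsqrt_pos k) (hη_pos k)
    have hca := hc_osc k hk a ha
    have hcb := hc_osc k hk b hb
    obtain ⟨u, hu⟩ : ∃ u, 2 * (Real.sqrt (δ k) * η k * a) = u := ⟨_, rfl⟩
    obtain ⟨v, hv⟩ : ∃ v, 2 * (Real.sqrt (δ k) * η k * b) = v := ⟨_, rfl⟩
    rw [hu] at hca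
    rw [hv] at hcb
    have hfactor : c a - c b = δ k * (4 * ε k * (Real.sin v - Real.sin u)
        + (ε k) ^ 2 * ((1 - Real.cos v) ^ 2 - (1 - Real.cos u) ^ 2)) := by
      rw [hca, hcb]; ring
    have hsq : ∀ M : ℝ, |Real.cos v - Real.cos u| ≤ M →
        |(1 - Real.cos v) ^ 2 - (1 - Real.cos u) ^ 2| ≤ 4 * M := by
      intro M hM
      have h1 : (1 - Real.cos v) ^ 2 - (1 - Real.cos u) ^ 2
          = (Real.cos u - Real.cos v) * (2 - Real.cos v - Real.cos u) := by ring
      rw [h1, abs_mul]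
      have h2 : |2 - Real.cos v - Real.cos u| ≤ 4 := by
        have := Real.neg_one_le_cos v; have := Real.cos_le_one v
        have := Real.neg_one_le_cos u; have := Real.cos_le_one u
        rw [abs_le]; constructor <;> linarith
      have h3 : |Real.cos u - Real.cos v| ≤ M := by rwa [abs_sub_comm]
      calc |Real.cos u - Real.cos v| * |2 - Real.cos v - Real.cos u|
          ≤ M * 4 := mul_le_mul h3 h2 (abs_nonneg _) (le_trans (abs_nonneg _) h3)
        _ = 4 * M := by ring
    have key_bound : ∀ M : ℝ, |Real.sin v - Real.sin u| ≤ M →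
        |Real.cos v - Real.cos u| ≤ M → |c a - c b| ≤ 10 * (ε k * δ k) * M := by
      intro M hM1 hM2
      have hM0 : 0 ≤ M := le_trans (abs_nonneg _) hM1
      have e1 : |4 * ε k * (Real.sin v - Real.sin u)| ≤ 4 * ε k * M := by
        rw [abs_mul, abs_of_pos (by linarith [hε_pos k] : (0:ℝ) < 4 * ε k)]
        exact mul_le_mul_of_nonneg_left hM1 (by linarith [hε_pos k])
      have e2 : |(ε k) ^ 2 * ((1 - Real.cos v) ^ 2 - (1 - Real.cos u) ^ 2)|
          ≤ (ε k) ^ 2 * (4 * M) := by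
        rw [abs_mul, abs_of_pos (pow_pos (hε_pos k) 2)]
        exact mul_le_mul_of_nonneg_left (hsq M hM2) (pow_pos (hε_pos k) 2).le
      have habs := abs_add_le (4 * ε k * (Real.sin v - Real.sin u))
        ((ε k) ^ 2 * ((1 - Real.cos v) ^ 2 - (1 - Real.cos u) ^ 2))
      have h4 : |4 * ε k * (Real.sin v - Real.sin u)
          + (ε k) ^ 2 * ((1 - Real.cos v) ^ 2 - (1 - Real.cos u) ^ 2)|
          ≤ 4 * ε k * M + (ε k) ^ 2 * (4 * M) := by linarith
      have h5 : |c a - c b| ≤ δ k * (4 * ε k * M + (ε k) ^ 2 * (4 * M)) := by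
        rw [hfactor, abs_mul, abs_of_pos (hδ_pos k)]
        exact mul_le_mul_of_nonneg_left h4 (hδ_pos k).le
      have h6 : δ k * (4 * ε k * M + (ε k) ^ 2 * (4 * M)) ≤ 10 * (ε k * δ k) * M := by
        have := amp_coeff (δ k) (ε k) M (δ k * (4 * ε k * M + (ε k) ^ 2 * (4 * M)))
          (hδ_pos k) (hε_pos k) (hε_le k) hM0 le_rfl
        linarith
      linarith
    have hamp : |c a - c b| ≤ 10 * (ε k * δ k) * 2 :=
      key_bound 2 (my_sin_bdd v u) (my_cos_bdd v u)
    have hvu : |v - u| = 2 * (Real.sqrt (δ k) * η k * (b - a)) := by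
      rw [← hu, ← hv]
      rw [abs_of_nonneg (by nlinarith [mul_nonneg hθp.le hσpos.le] :
        (0:ℝ) ≤ 2 * (Real.sqrt (δ k) * η k * b) - 2 * (Real.sqrt (δ k) * η k * a))]
      ring
    have hlip : |c a - c b| ≤ 10 * (ε k * δ k) * (2 * (Real.sqrt (δ k) * η k * (b - a))) :=
      key_bound _ (hvu ▸ my_sin_lip v u) (hvu ▸ my_cos_lip v u)
    have hPθ : 2 * π / (η k * Real.sqrt (δ k)) = 2 * π / (Real.sqrt (δ k) * η k) := by
      rw [mul_comm (η k) (Real.sqrt (δ k))]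
    have hωP : 0 < ω (2 * π / (Real.sqrt (δ k) * η k)) := hωpos _ (hPθ ▸ hPpos k)
    have hωσ : 0 < ω (b - a) := hωpos _ hσpos
    have hsup₃' : ε k * δ k ≤ C * ω (2 * π / (Real.sqrt (δ k) * η k)) := hPθ ▸ hsup₃ k hk
    have hεδ0 : 0 ≤ ε k * δ k := (mul_pos (hε_pos k) (hδ_pos k)).le
    by_cases hcase : 2 * π / (Real.sqrt (δ k) * η k) ≤ b - a
    · -- amplitude bound
      have hmono : ω (2 * π / (Real.sqrt (δ k) * η k)) ≤ ω (b - a) :=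
        hω_mono' _ _ (hPθ ▸ hPpos k).le hcase
      exact case_amp _ _ _ _ _ (by linarith [hamp]) hsup₃' hmono hCpos.le
        (hω_nonneg _ hσpos.le)
    · push_neg at hcase
      have h0 : (b - a) * ω (2 * π / (Real.sqrt (δ k) * η k))
          ≤ 2 * π / (Real.sqrt (δ k) * η k) * ω (b - a) :=
        (div_le_div_iff₀ hωσ hωP).1 (hω2 _ _ hσpos hcase.le)
      exact case_lip _ (ε k * δ k) (Real.sqrt (δ k) * η k) (b - a) C _ _
        (by linarith [hlip]) hsup₃' h0 hθp hσpos hCpos hωP hωσ hεδ0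
  -- affine piece
  have haff : ∀ k : ℕ, 1 ≤ k → ∀ a b : ℝ, a ∈ Set.Icc (s k) (t (k - 1)) →
      b ∈ Set.Icc (s k) (t (k - 1)) → a ≤ b → |c a - c b| ≤ C * ω (b - a) := by
    intro k hk a b ha hb hab
    rcases eq_or_lt_of_le hab with rfl | hab'
    · simp [hω_zero]
    have hσpos : 0 < b - a := sub_pos.2 hab'
    have hden : 0 < t (k - 1) - s k := sub_pos.2 (hs k hk).2
    have hca := hc_aff k hk a ha
    have hcb := hc_aff k hk b hb
    have hdiff : c b - c a = (δ (k - 1) - δ k) / (t (k - 1) - s k) * (b - a) := by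
      rw [hca, hcb]; ring
    have hΔδ : 0 ≤ δ (k - 1) - δ k := sub_nonneg.2 (hδ_anti (Nat.sub_le k 1))
    have hσle : b - a ≤ t (k - 1) - s k := by
      have h1 := ha.1; have h2 := hb.2; linarith
    have hωσ : 0 < ω (b - a) := hωpos _ hσpos
    have hωΔ : 0 < ω (t (k - 1) - s k) := hωpos _ hden
    have h0 : (b - a) * ω (t (k - 1) - s k) ≤ (t (k - 1) - s k) * ω (b - a) :=
      (div_le_div_iff₀ hωσ hωΔ).1 (hω2 _ _ hσpos hσle)
    rw [abs_sub_comm, hdiff,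
      abs_of_nonneg (mul_nonneg (div_nonneg hΔδ hden.le) hσpos.le)]
    exact aff_combine _ _ _ _ _ _ (hsup₂ k hk) h0 hΔδ hden hσpos hωσ hωΔ hCpos
  -- one macro segment
  have hseg : ∀ k : ℕ, 1 ≤ k → ∀ a b : ℝ, a ∈ Set.Icc (t k) (t (k - 1)) →
      b ∈ Set.Icc (t k) (t (k - 1)) → a ≤ b → |c a - c b| ≤ 127 * C * ω (b - a) := by
    intro k hk a b ha hb hab
    rcases eq_or_lt_of_le hab with rfl | hab'
    · simp [hω_zero]
    have hσ0 : 0 ≤ b - a := sub_nonneg.2 hab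
    have hCω : 0 ≤ C * ω (b - a) := mul_nonneg hCpos.le (hω_nonneg _ hσ0)
    by_cases hb1 : b ≤ s k
    · have := hosc k hk a b ⟨ha.1, hab.trans hb1⟩ ⟨hb.1, hb1⟩ hab
      linarith
    push_neg at hb1
    by_cases ha1 : s k ≤ a
    · have := haff k hk a b ⟨ha1, ha.2⟩ ⟨ha1.trans hab, hb.2⟩ hab
      linarith
    push_neg at ha1
    have h1 := hosc k hk a (s k) ⟨ha.1, ha1.le⟩ ⟨(hs k hk).1.le, le_rfl⟩ ha1.le
    have h2 := haff k hk (s k) b ⟨le_rfl, (hs k hk).2.le⟩ ⟨hb1.le, hb.2⟩ hb1.le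
    have htri : |c a - c b| ≤ |c a - c (s k)| + |c (s k) - c b| := abs_sub_le _ _ _
    have hm1 : ω (s k - a) ≤ ω (b - a) := hω_mono' _ _ (by linarith) (by linarith)
    have hm2 : ω (b - s k) ≤ ω (b - a) := hω_mono' _ _ (by linarith) (by linarith)
    have p1 : 126 * C * ω (s k - a) ≤ 126 * C * ω (b - a) := by
      have := mul_le_mul_of_nonneg_left hm1 hCpos.le
      linarith
    have p2 : C * ω (b - s k) ≤ C * ω (b - a) :=
      mul_le_mul_of_nonneg_left hm2 hCpos.le
    linarith
  -- locating points
  have hloc : ∀ x : ℝ, 0 < x → x ≤ 1 → ∃ k : ℕ, 1 ≤ k ∧ x ∈ Set.Icc (t k) (t (k - 1)) := by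
    intro x hx hx1
    have hex : ∃ n, t n ≤ x := by
      obtain ⟨N, hN⟩ := Filter.eventually_atTop.1 (ht_lim.eventually (gt_mem_nhds hx))
      exact ⟨N, (hN N le_rfl).le⟩
    have hspec : t (Nat.find hex) ≤ x := Nat.find_spec hex
    rcases Nat.eq_zero_or_pos (Nat.find hex) with h0 | h1
    · have hx1' : x = 1 := by
        rw [h0, ht_zero] at hspec; linarith
      refine ⟨1, le_rfl, ?_, ?_⟩
      · rw [hx1']
        have := ht_anti (show 0 < 1 by norm_num)
        rw [ht_zero] at this
        linarith
      · simp only [Nat.sub_self]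
        rw [hx1', ht_zero]
    · refine ⟨Nat.find hex, h1, hspec, ?_⟩
      have hmin := Nat.find_min hex (show Nat.find hex - 1 < Nat.find hex from
        Nat.sub_lt h1 one_pos)
      push_neg at hmin
      exact hmin.le
  -- main inequality for ordered pairs
  have key : ∀ a b : ℝ, a ∈ Set.Icc (0:ℝ) 1 → b ∈ Set.Icc (0:ℝ) 1 → a ≤ b →
      |c a - c b| ≤ 255 * C * ω (b - a) := by
    intro a b ha hb hab
    rcases eq_or_lt_of_le hab with rfl | hab'
    · simp [hω_zero]
    have hσpos : 0 < b - a := sub_pos.2 hab'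
    have hωσ : 0 < ω (b - a) := hωpos _ hσpos
    have hCω : 0 < C * ω (b - a) := mul_pos hCpos hωσ
    rcases eq_or_lt_of_le ha.1 with ha0 | ha0
    · -- a = 0
      obtain ⟨k, hk1, hbk⟩ := hloc b (by linarith) hb.2
      have h1 : |c (t k) - c b| ≤ 127 * C * ω (b - t k) :=
        hseg k hk1 (t k) b ⟨le_rfl, ht_anti.antitone (Nat.sub_le k 1)⟩ hbk hbk.1
      have h2 : δ k - δinf ≤ C * ω (t k) := hδinfb k
      have htri : |c a - c b| ≤ |c a - c (t k)| + |c (t k) - c b| := abs_sub_le _ _ _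
      have hca : c a = δinf := by rw [← ha0]; exact hc_zero
      have habs : |c a - c (t k)| = δ k - δinf := by
        rw [hca, hct k, abs_sub_comm, abs_of_nonneg (sub_nonneg.2 (hδinf_le k))]
      have hm1 : ω (t k) ≤ ω (b - a) :=
        hω_mono' _ _ (ht_pos k).le (by have := hbk.1; linarith)
      have hm2 : ω (b - t k) ≤ ω (b - a) :=
        hω_mono' _ _ (by have := hbk.1; linarith) (by have := ht_pos k; linarith)
      have p1 : C * ω (t k) ≤ C * ω (b - a) := mul_le_mul_of_nonneg_left hm1 hCpos.le
      have p2 : 127 * C * ω (b - t k) ≤ 127 * C * ω (b - a) := by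
        have := mul_le_mul_of_nonneg_left hm2 hCpos.le
        linarith
      linarith
    · -- 0 < a
      obtain ⟨k, hk1, hak⟩ := hloc a ha0 ha.2
      obtain ⟨l, hl1, hbl⟩ := hloc b (by linarith) hb.2
      have hlk : l ≤ k := by
        by_contra hcon
        push_neg at hcon
        have hkl : k ≤ l - 1 := Nat.le_sub_one_of_lt hcon
        have h1 : b ≤ t k := hbl.2.trans (ht_anti.antitone hkl)
        have h2 : b ≤ a := h1.trans hak.1
        linarith
      rcases eq_or_lt_of_le hlk with rfl | hlt
      · have := hseg l hl1 a b hak hbl hab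
        linarith
      · -- l < k
        have hlk1 : l ≤ k - 1 := Nat.le_sub_one_of_lt hlt
        have htkl : t (k - 1) ≤ t l := ht_anti.antitone hlk1
        have htlb : t l ≤ b := hbl.1
        have hatk : a ≤ t (k - 1) := hak.2
        have h1 : |c a - c (t (k - 1))| ≤ 127 * C * ω (t (k - 1) - a) :=
          hseg k hk1 a (t (k - 1)) hak ⟨(hs k hk1).1.le.trans (hs k hk1).2.le, le_rfl⟩ hatk
        have h3 : |c (t l) - c b| ≤ 127 * C * ω (b - t l) :=
          hseg l hl1 (t l) b ⟨le_rfl, ht_anti.antitone (Nat.sub_le l 1)⟩ hbl hbl.1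
        have h2 : δ l - δ (k - 1) ≤ C * ω (t l - t (k - 1)) := by
          rcases eq_or_lt_of_le hlk1 with heq | hlt2
          · rw [← heq]; simp [hω_zero]
          · exact hsup₁ l (k - 1) hlt2
        have habs2 : |c (t (k - 1)) - c (t l)| = δ l - δ (k - 1) := by
          rw [hct, hct, abs_sub_comm, abs_of_nonneg (sub_nonneg.2 (hδ_anti hlk1))]
        have htri : |c a - c b| ≤ |c a - c (t (k - 1))| + |c (t (k - 1)) - c (t l)|
            + |c (t l) - c b| := by
          calc |c a - c b| ≤ |c a - c (t l)| + |c (t l) - c b| := abs_sub_le _ _ _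
            _ ≤ |c a - c (t (k - 1))| + |c (t (k - 1)) - c (t l)| + |c (t l) - c b| := by
                linarith [abs_sub_le (c a) (c (t (k - 1))) (c (t l))]
        have hm1 : ω (t (k - 1) - a) ≤ ω (b - a) :=
          hω_mono' _ _ (by linarith) (by linarith)
        have hm2 : ω (t l - t (k - 1)) ≤ ω (b - a) :=
          hω_mono' _ _ (by linarith) (by linarith)
        have hm3 : ω (b - t l) ≤ ω (b - a) :=
          hω_mono' _ _ (by linarith) (by linarith)
        have p1 : 127 * C * ω (t (k - 1) - a) ≤ 127 * C * ω (b - a) := by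
          have := mul_le_mul_of_nonneg_left hm1 hCpos.le; linarith
        have p2 : C * ω (t l - t (k - 1)) ≤ C * ω (b - a) :=
          mul_le_mul_of_nonneg_left hm2 hCpos.le
        have p3 : 127 * C * ω (b - t l) ≤ 127 * C * ω (b - a) := by
          have := mul_le_mul_of_nonneg_left hm3 hCpos.le; linarith
        linarith
  refine ⟨255 * C, fun a ha b hb => ?_⟩
  rcases le_total a b with h | h
  · have := key a b ha hb h
    rwa [abs_sub_comm a b, abs_of_nonneg (sub_nonneg.2 h)]
  · have := key b a hb ha h
    rwa [abs_sub_comm (c a), abs_of_nonneg (sub_nonneg.2 h)]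
end

section
/- For every ε ∈ ℝ, the function w(ε,t) := sin(t)·exp(ε·(t − (1/2)·sin(2t))) satisfies the ordinary differential equation w_tt(ε,t) + b(ε,t)·w(ε,t) = 0 for all t ∈ ℝ, where b(ε,t) := 1 − 4ε·sin(2t) − ε²·(1−cos(2t))². -/
/-!
Write `w = u · exp g` with `u = sin` and `g(t) = ε (t - sin(2t)/2)`, so `g' = ε (1 - cos 2t)` and
`g'' = 2ε sin 2t`. Then `w'' = (u'' + 2u'g' + u g'' + u g'²) exp g`, and since
`cos t (1 - cos 2t) = sin t sin 2t` the two middle terms combine to `4ε sin 2t · sin t`; with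
`u'' = -u` this is exactly `-b w`.
-/

open Real

theorem deriv_deriv_mul_exp {u u' u'' g g' g'' : ℝ → ℝ}
    (hu : ∀ x, HasDerivAt u (u' x) x) (hu' : ∀ x, HasDerivAt u' (u'' x) x)
    (hg : ∀ x, HasDerivAt g (g' x) x) (hg' : ∀ x, HasDerivAt g' (g'' x) x) (t : ℝ) :
    deriv (deriv fun x => u x * exp (g x)) t =
      (u'' t + 2 * u' t * g' t + u t * g'' t + u t * g' t ^ 2) * exp (g t) := by
  have h_first : deriv (fun x => u x * exp (g x)) = fun x => (u' x + u x * g' x) * exp (g x) := by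
    funext x
    have h : HasDerivAt (fun x => u x * exp (g x)) _ x := (hu x).mul (hg x).exp
    rw [h.deriv]
    ring
  have h_second : HasDerivAt (fun x => (u' x + u x * g' x) * exp (g x)) _ t :=
    ((hu' t).add ((hu t).mul (hg' t))).mul (hg t).exp
  rw [h_first, h_second.deriv, Pi.add_apply, Pi.mul_apply]
  ring

theorem hasDerivAt_sin_two_mul (x : ℝ) :
    HasDerivAt (fun x => sin (2 * x)) (2 * cos (2 * x)) x :=
  ((hasDerivAt_id' x).const_mul 2).sin.congr_deriv (by ring)

theorem hasDerivAt_cos_two_mul (x : ℝ) :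
    HasDerivAt (fun x => cos (2 * x)) (-(2 * sin (2 * x))) x :=
  ((hasDerivAt_id' x).const_mul 2).cos.congr_deriv (by ring)

theorem hasDerivAt_sub_sin_two_mul_div_two (x : ℝ) :
    HasDerivAt (fun x => x - sin (2 * x) / 2) (1 - cos (2 * x)) x :=
  ((hasDerivAt_id' x).sub ((hasDerivAt_sin_two_mul x).div_const 2)).congr_deriv (by ring)

theorem hasDerivAt_one_sub_cos_two_mul (x : ℝ) :
    HasDerivAt (fun x => 1 - cos (2 * x)) (2 * sin (2 * x)) x :=
  ((hasDerivAt_cos_two_mul x).const_sub 1).congr_deriv (by ring)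

theorem cos_mul_one_sub_cos_two_mul (x : ℝ) : cos x * (1 - cos (2 * x)) = sin x * sin (2 * x) := by
  rw [cos_two_mul, sin_two_mul]
  linear_combination (-2 * cos x) * sin_sq_add_cos_sq x

/-- The function `w(ε,t) = sin t · exp(ε(t - sin(2t)/2))`
solves `w_tt + b(ε,t) · w = 0` where
`b(ε,t) = 1 - 4ε sin(2t) - ε²(1 - cos(2t))²`. -/
theorem w_solves_ode (ε : ℝ) (t : ℝ) :
    deriv (deriv (fun x : ℝ =>
        Real.sin x * Real.exp (ε * (x - Real.sin (2 * x) / 2)))) t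
      + (1 - 4 * ε * Real.sin (2 * t) - ε ^ 2 * (1 - Real.cos (2 * t)) ^ 2)
        * (Real.sin t * Real.exp (ε * (t - Real.sin (2 * t) / 2))) = 0 := by
  rw [deriv_deriv_mul_exp hasDerivAt_sin hasDerivAt_cos
    (fun x => (hasDerivAt_sub_sin_two_mul_div_two x).const_mul ε)
    (fun x => (hasDerivAt_one_sub_cos_two_mul x).const_mul ε) t]
  linear_combination (2 * ε * exp (ε * (t - sin (2 * t) / 2))) * cos_mul_one_sub_cos_two_mul t
end

section
/- Let ω:[0,∞)→[0,∞) be a continuity modulus satisfying (ω1) and (ω2), strictly increasing on a right neighborhood of 0, with inverse function ω^{-1}. Define g(σ) := √σ · ω^{-1}(σ) for σ > 0 in the domain of ω^{-1}; then g is strictly increasing, and denoting by h its inverse function, for every exponent γ < 3/2 one has lim_{z→+∞} z·[h(1/z)]^γ = +∞. -/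
/-!
Since `ω` is continuous and strictly increasing near `0`, every small `t > 0` is `g (ω s)` for
some `s`, and `ωinv (ω s) = s`; as `g` is strictly increasing, `y := h t` then tends to `0⁺` with
`t`. Condition (ω2) gives the linear lower bound `ω s ≥ (ω ν / ν) s` on `(0, ν]`, i.e.
`ωinv y ≤ (ν / ω ν) y`, hence `t = g y ≤ (ν / ω ν) y^{3/2}`. Therefore
`t⁻¹ · y^γ ≥ (ω ν / ν) · y^{γ - 3/2}`, which tends to `+∞` because `γ - 3/2 < 0`.
-/

open Set Filter Topology

theorem StrictMonoOn.strictMonoOn_image_of_leftInvOn {α β : Type*} [LinearOrder α] [Preorder β]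
    {f : α → β} {f' : β → α} {s : Set α} (hf : StrictMonoOn f s) (hf' : LeftInvOn f' f s) :
    StrictMonoOn f' (f '' s) := by
  rintro _ ⟨x, hx, rfl⟩ _ ⟨y, hy, rfl⟩ hxy
  rw [hf' hx, hf' hy]
  exact (hf.lt_iff_lt hx hy).1 hxy

theorem tendsto_nhdsGT_zero_of_leftInvOn {g h : ℝ → ℝ} {a : ℝ} (hg : StrictMonoOn g (Ioo 0 a))
    (hpos : MapsTo g (Ioo 0 a) (Ioi 0)) (hh : LeftInvOn h g (Ioo 0 a))
    (hsurj : ∀ᶠ t in 𝓝[>] 0, t ∈ g '' Ioo 0 a) : Tendsto h (𝓝[>] 0) (𝓝[>] 0) := by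
  obtain ⟨_, y₀, hy₀, -⟩ := hsurj.exists
  refine (nhdsGT_basis 0).tendsto_right_iff.2 fun ε hε => ?_
  have hε' : min ε y₀ ∈ Ioo 0 a := ⟨lt_min hε hy₀.1, (min_le_right _ _).trans_lt hy₀.2⟩
  filter_upwards [hsurj, Ioo_mem_nhdsGT (hpos hε')] with t ht_image ht
  obtain ⟨y, hy, rfl⟩ := ht_image
  rw [hh hy]
  exact ⟨hy.1, ((hg.lt_iff_lt hy hε').1 ht.2).trans_le (min_le_left _ _)⟩

theorem mul_rpow_sub_le_inv_mul_rpow {c t y p γ : ℝ} (hy : 0 < y) (ht : 0 < t)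
    (h : c * t ≤ y ^ p) : c * y ^ (γ - p) ≤ t⁻¹ * y ^ γ := by
  rw [Real.rpow_sub hy, inv_mul_eq_div, mul_div_assoc', div_le_div_iff₀ (by positivity) ht]
  calc c * y ^ γ * t = y ^ γ * (c * t) := by ring
    _ ≤ y ^ γ * y ^ p := mul_le_mul_of_nonneg_left h (by positivity)

section ContinuityModulus

variable {ω ωinv : ℝ → ℝ} {ν : ℝ}

theorem strictMonoOn_inv_of_continuousOn (hν : 0 ≤ ν) (hcont : ContinuousOn ω (Icc 0 ν))
    (h0 : ω 0 = 0) (hstrict : StrictMonoOn ω (Icc 0 ν)) (hinv : LeftInvOn ωinv ω (Icc 0 ν)) :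
    StrictMonoOn ωinv (Icc 0 (ω ν)) :=
  (hstrict.strictMonoOn_image_of_leftInvOn hinv).mono
    (by simpa only [h0] using intermediate_value_Icc hν hcont)

theorem inv_mem_Ioc_of_continuousOn (hν : 0 ≤ ν) (hcont : ContinuousOn ω (Icc 0 ν))
    (h0 : ω 0 = 0) (hinv : LeftInvOn ωinv ω (Icc 0 ν)) {y : ℝ} (hy : y ∈ Ioc 0 (ω ν)) :
    ωinv y ∈ Ioc 0 ν ∧ ω (ωinv y) = y := by
  obtain ⟨σ, hσ, rfl⟩ : y ∈ ω '' Icc 0 ν :=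
    intermediate_value_Icc hν hcont (by simpa only [h0] using Ioc_subset_Icc_self hy)
  rw [hinv hσ]
  refine ⟨⟨hσ.1.lt_of_ne ?_, hσ.2⟩, rfl⟩
  rintro rfl
  exact hy.1.ne' h0

theorem div_mul_inv_le (hν : 0 < ν) (hcont : ContinuousOn ω (Icc 0 ν)) (h0 : ω 0 = 0)
    (hω2 : ∀ a b : ℝ, 0 < a → a ≤ b → a / ω a ≤ b / ω b) (hinv : LeftInvOn ωinv ω (Icc 0 ν))
    {y : ℝ} (hy : y ∈ Ioc 0 (ω ν)) : ω ν / ν * ωinv y ≤ y := by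
  obtain ⟨⟨hσ, hσν⟩, hωσ⟩ := inv_mem_Ioc_of_continuousOn hν.le hcont h0 hinv hy
  have hratio := hω2 _ _ hσ hσν
  rw [hωσ, div_le_div_iff₀ hy.1 (hy.1.trans_le hy.2)] at hratio
  rw [div_mul_eq_mul_div, div_le_iff₀ hν]
  linarith

theorem div_mul_sqrt_mul_inv_le_rpow (hν : 0 < ν) (hcont : ContinuousOn ω (Icc 0 ν))
    (h0 : ω 0 = 0) (hω2 : ∀ a b : ℝ, 0 < a → a ≤ b → a / ω a ≤ b / ω b)
    (hinv : LeftInvOn ωinv ω (Icc 0 ν)) {y : ℝ} (hy : y ∈ Ioc 0 (ω ν)) :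
    ω ν / ν * (√y * ωinv y) ≤ y ^ (3 / 2 : ℝ) := by
  have hy32 : y ^ (3 / 2 : ℝ) = √y * y := by
    rw [Real.sqrt_eq_rpow, ← Real.rpow_add_one hy.1.ne']
    norm_num
  rw [hy32, mul_left_comm]
  exact mul_le_mul_of_nonneg_left (div_mul_inv_le hν hcont h0 hω2 hinv hy) (Real.sqrt_nonneg y)

theorem strictMonoOn_sqrt_mul_inv (hν : 0 ≤ ν) (hcont : ContinuousOn ω (Icc 0 ν))
    (h0 : ω 0 = 0) (hstrict : StrictMonoOn ω (Icc 0 ν)) (hinv : LeftInvOn ωinv ω (Icc 0 ν)) :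
    StrictMonoOn (fun σ => √σ * ωinv σ) (Ioo 0 (ω ν)) := by
  intro a ha b hb hab
  have hinv_lt := strictMonoOn_inv_of_continuousOn hν hcont h0 hstrict hinv
    (Ioo_subset_Icc_self ha) (Ioo_subset_Icc_self hb) hab
  have hinv_pos := (inv_mem_Ioc_of_continuousOn hν hcont h0 hinv (Ioo_subset_Ioc_self ha)).1.1
  exact mul_lt_mul'' (Real.sqrt_lt_sqrt ha.1.le hab) hinv_lt (Real.sqrt_nonneg a) hinv_pos.le

theorem Ioo_subset_image_sqrt_mul_inv (hν : 0 ≤ ν) (hcont : ContinuousOn ω (Icc 0 ν))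
    (h0 : ω 0 = 0) (hstrict : StrictMonoOn ω (Icc 0 ν)) (hinv : LeftInvOn ωinv ω (Icc 0 ν)) :
    Ioo 0 (√(ω ν) * ν) ⊆ (fun σ => √σ * ωinv σ) '' Ioo 0 (ω ν) := by
  intro t ht
  -- `ωinv` need not be continuous, but `g ∘ ω = fun s => √(ω s) * s` on `[0, ν]` is
  have hG : ContinuousOn (fun s => √(ω s) * s) (Icc 0 ν) := hcont.sqrt.mul continuousOn_id
  obtain ⟨s, hs, rfl⟩ := intermediate_value_Ioo hν hG (by simpa only [h0, mul_zero] using ht)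
  have hs' := Ioo_subset_Icc_self hs
  refine ⟨ω s, ⟨?_, hstrict hs' (right_mem_Icc.2 hν) hs.2⟩, by simp only [hinv hs']⟩
  simpa only [h0] using hstrict (left_mem_Icc.2 hν) hs' hs.1

end ContinuityModulus

theorem h_power_limit_general
    (ω : ℝ → ℝ)
    (hω_cont : ContinuousOn ω (Set.Ici 0))
    (hω_zero : ω 0 = 0)
    (hω2 : ∀ a b : ℝ, 0 < a → a ≤ b → a / ω a ≤ b / ω b)
    (ν : ℝ) (hν : 0 < ν)
    (hω_strict : StrictMonoOn ω (Set.Icc 0 ν))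
    (ωinv : ℝ → ℝ)
    (hinv_left : ∀ σ ∈ Set.Icc (0:ℝ) ν, ωinv (ω σ) = σ) :
    StrictMonoOn (fun σ => Real.sqrt σ * ωinv σ) (Set.Ioo 0 (ω ν)) ∧
    ∀ h : ℝ → ℝ,
      (∀ σ ∈ Set.Ioo (0:ℝ) (ω ν), h (Real.sqrt σ * ωinv σ) = σ) →
      ∀ γ : ℝ, γ < 3 / 2 →
        Filter.Tendsto (fun z : ℝ => z * (h (1 / z)) ^ γ)
          Filter.atTop Filter.atTop := by
  have hcont : ContinuousOn ω (Icc 0 ν) := hω_cont.mono Icc_subset_Ici_self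
  have hinv : LeftInvOn ωinv ω (Icc 0 ν) := hinv_left
  have hων : 0 < ω ν := by
    simpa only [hω_zero] using hω_strict (left_mem_Icc.2 hν.le) (right_mem_Icc.2 hν.le) hν
  have hg := strictMonoOn_sqrt_mul_inv hν.le hcont hω_zero hω_strict hinv
  refine ⟨hg, fun h hh γ hγ => ?_⟩
  have hg_pos : MapsTo (fun σ => √σ * ωinv σ) (Ioo 0 (ω ν)) (Ioi 0) := fun y hy =>
    mul_pos (Real.sqrt_pos.2 hy.1)
      (inv_mem_Ioc_of_continuousOn hν.le hcont hω_zero hinv (Ioo_subset_Ioc_self hy)).1.1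
  have hsurj : ∀ᶠ t in 𝓝[>] 0, t ∈ (fun σ => √σ * ωinv σ) '' Ioo 0 (ω ν) :=
    mem_of_superset (Ioo_mem_nhdsGT (by positivity))
      (Ioo_subset_image_sqrt_mul_inv hν.le hcont hω_zero hω_strict hinv)
  have hone_div : Tendsto (fun z : ℝ => 1 / z) atTop (𝓝[>] 0) := by
    simpa only [one_div] using tendsto_inv_atTop_nhdsGT_zero
  have hsmall : Tendsto (fun z => h (1 / z)) atTop (𝓝[>] 0) :=
    (tendsto_nhdsGT_zero_of_leftInvOn hg hg_pos hh hsurj).comp hone_div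
  have hbound : ∀ᶠ z in atTop, ω ν / ν * h (1 / z) ^ (γ - 3 / 2) ≤ z * h (1 / z) ^ γ := by
    filter_upwards [hone_div.eventually hsurj] with z ⟨y, hy, hyz⟩
    simp only at hyz
    have hz : z = (√y * ωinv y)⁻¹ := by rw [hyz, one_div, inv_inv]
    rw [← hyz, hh y hy, hz]
    exact mul_rpow_sub_le_inv_mul_rpow hy.1 (hg_pos hy)
      (div_mul_sqrt_mul_inv_le_rpow hν hcont hω_zero hω2 hinv (Ioo_subset_Ioc_self hy))
  exact tendsto_atTop_mono' atTop hbound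
    (((tendsto_rpow_neg_nhdsGT_zero (by linarith)).comp hsmall).const_mul_atTop (by positivity))

/-- Let `ω` satisfy (ω1) and (ω2), strictly increasing on a
right neighborhood `[0,ν]` of `0`, with (local) inverse `ωinv`. Then
`g(σ) = √σ · ωinv σ` is strictly increasing, and for any inverse function `h`
of `g` and any exponent `γ < 3/2` one has `z · h(1/z)^γ → +∞` as `z → +∞`. -/
theorem h_power_limit
    (ω : ℝ → ℝ)
    (hω_cont : ContinuousOn ω (Set.Ici 0))
    (hω_mono : MonotoneOn ω (Set.Ici 0))
    (hω_nonneg : ∀ σ ≥ (0:ℝ), 0 ≤ ω σ)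
    (hω_zero : ω 0 = 0)
    (hω_subadd : ∀ a ≥ (0:ℝ), ∀ b ≥ (0:ℝ), ω (a + b) ≤ ω a + ω b)
    (hω2 : ∀ a b : ℝ, 0 < a → a ≤ b → a / ω a ≤ b / ω b)
    (ν : ℝ) (hν : 0 < ν)
    (hω_strict : StrictMonoOn ω (Set.Icc 0 ν))
    (ωinv : ℝ → ℝ)
    (hinv_left : ∀ σ ∈ Set.Icc (0:ℝ) ν, ωinv (ω σ) = σ)
    (hinv_right : ∀ y ∈ Set.Icc 0 (ω ν), ω (ωinv y) = y) :
    StrictMonoOn (fun σ => Real.sqrt σ * ωinv σ) (Set.Ioo 0 (ω ν)) ∧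
    ∀ h : ℝ → ℝ,
      (∀ σ ∈ Set.Ioo (0:ℝ) (ω ν), h (Real.sqrt σ * ωinv σ) = σ) →
      ∀ γ : ℝ, γ < 3 / 2 →
        Filter.Tendsto (fun z : ℝ => z * (h (1 / z)) ^ γ)
          Filter.atTop Filter.atTop :=
  h_power_limit_general ω hω_cont hω_zero hω2 ν hν hω_strict ωinv hinv_left
end

section
/- Let ω:[0,∞)→[0,∞) be a continuity modulus satisfying (ω1) and (ω2), strictly increasing on a right neighborhood of 0 with inverse ω^{-1}; let g(σ) := √σ · ω^{-1}(σ) and let h be the inverse function of g. Let φ:[0,∞)→[1,∞) satisfy lim_{σ→+∞} σ·[φ(σ/√(ω(1/σ)))]^{-1} = +∞. Then lim_{z→+∞} (z/φ(z))·[h(1/z)]^{1/2} = +∞. -/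
/-!
For large `z` pick `τ > 0` small with `√(ω τ) · τ = 1/z` (intermediate value theorem).
Then `1/z = g (ω τ)`, so `h (1/z) = ω τ` and `z · √(h (1/z)) = 1/τ`, while
`z = s / √(ω (1/s))` for `s = 1/τ`. The expression in question is therefore
`s / φ (s / √(ω (1/s)))`, and `s → +∞` as `z → +∞`.
-/

open Filter Topology Set

theorem eventually_exists_mem_Ioc_eq_inv {F : ℝ → ℝ} {t : ℝ} (ht : 0 ≤ t)
    (hF : ContinuousOn F (Icc 0 t)) (hF0 : F 0 = 0) (hFt : 0 < F t) :
    ∀ᶠ z in atTop, ∃ τ ∈ Ioc 0 t, F τ = z⁻¹ := by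
  filter_upwards [eventually_ge_atTop (F t)⁻¹, eventually_gt_atTop 0] with z hz hz0
  obtain ⟨τ, hτ, hFτ⟩ := intermediate_value_Icc ht hF
    ⟨hF0.symm ▸ (inv_pos.mpr hz0).le, inv_le_of_inv_le₀ hFt hz⟩
  refine ⟨τ, ⟨hτ.1.lt_of_ne ?_, hτ.2⟩, hFτ⟩
  rintro rfl
  exact (inv_pos.mpr hz0).ne' (hFτ.symm.trans hF0)

theorem h_sqrt_phi_limit_general
    (ω : ℝ → ℝ)
    (hω_cont : ContinuousOn ω (Set.Ici 0))
    (hω_zero : ω 0 = 0)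
    (ν : ℝ) (hν : 0 < ν)
    (hω_strict : StrictMonoOn ω (Set.Icc 0 ν))
    (ωinv : ℝ → ℝ)
    (hinv_left : ∀ σ ∈ Set.Icc (0:ℝ) ν, ωinv (ω σ) = σ)
    (φ : ℝ → ℝ)
    (hφ_lim : Filter.Tendsto
      (fun σ : ℝ => σ * (φ (σ / Real.sqrt (ω (1 / σ))))⁻¹)
      Filter.atTop Filter.atTop) :
    ∀ h : ℝ → ℝ,
      (∀ σ ∈ Set.Ioo (0:ℝ) (ω ν), h (Real.sqrt σ * ωinv σ) = σ) →
      Filter.Tendsto (fun z : ℝ => z / φ z * Real.sqrt (h (1 / z)))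
        Filter.atTop Filter.atTop := by
  intro h hh
  have hω_pos : ∀ τ ∈ Ioc 0 ν, 0 < ω τ := fun τ hτ =>
    hω_zero ▸ hω_strict ⟨le_rfl, hν.le⟩ (Ioc_subset_Icc_self hτ) hτ.1
  rw [tendsto_atTop]
  intro M
  obtain ⟨t, ht, hsmall⟩ := mem_nhdsGT_iff_exists_Ioc_subset.mp
    ((eventually_nhdsWithin_of_eventually_nhds (eventually_lt_nhds hν)).and
      (tendsto_inv_nhdsGT_zero.eventually (hφ_lim.eventually_ge_atTop M)))
  have htν : t < ν := (hsmall ⟨ht, le_rfl⟩).1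
  have hF_cont : ContinuousOn (fun τ => √(ω τ) * τ) (Icc 0 t) :=
    (hω_cont.mono Icc_subset_Ici_self).sqrt.mul continuousOn_id
  have hFt : 0 < √(ω t) * t :=
    mul_pos (Real.sqrt_pos.mpr (hω_pos t ⟨ht, htν.le⟩)) ht
  filter_upwards [eventually_exists_mem_Ioc_eq_inv (le_of_lt ht) hF_cont (by simp) hFt,
    eventually_gt_atTop 0] with z ⟨τ, hτ, hFτ⟩ hz
  obtain ⟨hτν, hM⟩ := hsmall hτ
  have hωτ : 0 < ω τ := hω_pos τ ⟨hτ.1, hτν.le⟩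
  have hzτ : z * √(ω τ) = τ⁻¹ :=
    eq_inv_of_mul_eq_one_left (by rw [mul_assoc, hFτ, mul_inv_cancel₀ hz.ne'])
  have hh_z : h (1 / z) = ω τ := by
    have := hh (ω τ) ⟨hωτ, hω_strict ⟨hτ.1.le, hτν.le⟩ ⟨hν.le, le_rfl⟩ hτν⟩
    rwa [hinv_left τ ⟨hτ.1.le, hτν.le⟩, hFτ, ← one_div] at this
  have hz_eq : τ⁻¹ / √(ω (1 / τ⁻¹)) = z := by
    rw [one_div, inv_inv, ← hzτ, mul_div_cancel_right₀ _ (Real.sqrt_pos.mpr hωτ).ne']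
  calc M ≤ τ⁻¹ * (φ z)⁻¹ := hz_eq ▸ hM
    _ = z / φ z * √(h (1 / z)) := by rw [hh_z, ← hzτ]; ring

/-- Let `ω` satisfy (ω1) and (ω2), strictly increasing on a
right neighborhood `[0,ν]` of `0` with local inverse `ωinv`; let
`g(σ) = √σ · ωinv σ` and let `h` be an inverse function of `g`. If
`φ : [0,∞) → [1,∞)` satisfies `σ / φ(σ/√(ω(1/σ))) → +∞` as `σ → +∞`, then
`(z/φ(z)) · √(h(1/z)) → +∞` as `z → +∞`. -/
theorem h_sqrt_phi_limit
    (ω : ℝ → ℝ)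
    (hω_cont : ContinuousOn ω (Set.Ici 0))
    (hω_mono : MonotoneOn ω (Set.Ici 0))
    (hω_nonneg : ∀ σ ≥ (0:ℝ), 0 ≤ ω σ)
    (hω_zero : ω 0 = 0)
    (hω_subadd : ∀ a ≥ (0:ℝ), ∀ b ≥ (0:ℝ), ω (a + b) ≤ ω a + ω b)
    (hω2 : ∀ a b : ℝ, 0 < a → a ≤ b → a / ω a ≤ b / ω b)
    (ν : ℝ) (hν : 0 < ν)
    (hω_strict : StrictMonoOn ω (Set.Icc 0 ν))
    (ωinv : ℝ → ℝ)
    (hinv_left : ∀ σ ∈ Set.Icc (0:ℝ) ν, ωinv (ω σ) = σ)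
    (hinv_right : ∀ y ∈ Set.Icc 0 (ω ν), ω (ωinv y) = y)
    (φ : ℝ → ℝ)
    (hφ_ge : ∀ σ ≥ (0:ℝ), 1 ≤ φ σ)
    (hφ_lim : Filter.Tendsto
      (fun σ : ℝ => σ * (φ (σ / Real.sqrt (ω (1 / σ))))⁻¹)
      Filter.atTop Filter.atTop) :
    ∀ h : ℝ → ℝ,
      (∀ σ ∈ Set.Ioo (0:ℝ) (ω ν), h (Real.sqrt σ * ωinv σ) = σ) →
      Filter.Tendsto (fun z : ℝ => z / φ z * Real.sqrt (h (1 / z)))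
        Filter.atTop Filter.atTop :=
  h_sqrt_phi_limit_general ω hω_cont hω_zero ν hν hω_strict ωinv hinv_left φ hφ_lim
end
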